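/- Let T be a fully-resolved X-tree with a proper edge-weighting w, and suppose L ⊆ binom(X,2) has the property that for every interior vertex v of T, L contains every cord xy such that x is a leaf at minimum weighted path distance to v in one component of T − v and y is a leaf at minimum weighted path distance to v in another component of T − v. Then L contains a stable triplet cover for T. -/

import Mathlib

open SimpleGraph

/-- An `X`-tree: a finite tree whose leaf set is (the image of) `X`,
with no vertices of degree 2. -/
structure XTree (α : Type) (X : Set α) where
  V : Type
  fintypeV : Fintype V
  tree : SimpleGraph V
  isTree : tree.IsTree
  ι : α → V
  ι_injOn : Set.InjOn ι X
  leaf_iff : ∀ v : V, (tree.neighborSet v).ncard = 1 ↔ v ∈ ι '' X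
  no_deg_two : ∀ v : V, (tree.neighborSet v).ncard ≠ 2

namespace XTree

variable {α : Type} {X : Set α}

/-- A vertex is interior if it is not a leaf. -/
def IsInterior (T : XTree α X) (v : T.V) : Prop := v ∉ T.ι '' X

/-- Fully-resolved: every interior vertex has degree 3. -/
def IsFullyResolved (T : XTree α X) : Prop :=
  ∀ v : T.V, T.IsInterior v → (T.tree.neighborSet v).ncard = 3

/-- The unique path between two vertices of the tree. -/
noncomputable def treePath (T : XTree α X) (u v : T.V) : T.tree.Walk u v :=
  (T.isTree.existsUnique_path u v).exists.choose

lemma treePath_isPath (T : XTree α X) (u v : T.V) : (T.treePath u v).IsPath :=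
  (T.isTree.existsUnique_path u v).exists.choose_spec

/-- Weighted path distance between two vertices. -/
noncomputable def pathDist (T : XTree α X) (w : Sym2 T.V → ℝ) (u v : T.V) : ℝ :=
  ((T.treePath u v).edges.map w).sum

lemma treePath_symm (T : XTree α X) (u v : T.V) :
    T.treePath u v = (T.treePath v u).reverse :=
  (T.isTree.existsUnique_path u v).unique (T.treePath_isPath u v)
    ((T.treePath_isPath v u).reverse)

lemma pathDist_symm (T : XTree α X) (w : Sym2 T.V → ℝ) (u v : T.V) :
    T.pathDist w u v = T.pathDist w v u := by
  unfold pathDist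
  rw [treePath_symm, SimpleGraph.Walk.edges_reverse, List.map_reverse, List.sum_reverse]

/-- The induced distance on pairs of leaf labels. -/
noncomputable def cordDist (T : XTree α X) (w : Sym2 T.V → ℝ) : Sym2 α → ℝ :=
  Sym2.lift ⟨fun a b => T.pathDist w (T.ι a) (T.ι b),
    fun a b => T.pathDist_symm w (T.ι a) (T.ι b)⟩

/-- An edge-weighting assigns a nonnegative weight to every edge. -/
def IsEdgeWeighting (T : XTree α X) (w : Sym2 T.V → ℝ) : Prop :=
  ∀ e ∈ T.tree.edgeSet, 0 ≤ w e

/-- A proper edge-weighting gives positive weight to every interior edge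
(i.e. every edge not incident with a leaf). -/
def IsProperWeighting (T : XTree α X) (w : Sym2 T.V → ℝ) : Prop :=
  T.IsEdgeWeighting w ∧ ∀ e ∈ T.tree.edgeSet, (∀ v ∈ e, T.IsInterior v) → 0 < w e

/-- The set of cords (2-element subsets) of `X`. -/
def cords (X : Set α) : Set (Sym2 α) := {c | ¬ c.IsDiag ∧ ∀ a ∈ c, a ∈ X}

/-- Two weighted trees are `L`-isometric if their leaf distances agree on `L`. -/
def LIsometric (T : XTree α X) (w : Sym2 T.V → ℝ) (T' : XTree α X) (w' : Sym2 T'.V → ℝ)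
    (L : Set (Sym2 α)) : Prop :=
  ∀ c ∈ L, T.cordDist w c = T'.cordDist w' c

/-- `L` is an edge-weight lasso for `T`. -/
def IsEdgeWeightLasso (T : XTree α X) (L : Set (Sym2 α)) : Prop :=
  ∀ w w' : Sym2 T.V → ℝ, T.IsProperWeighting w → T.IsProperWeighting w' →
    LIsometric T w T w' L → ∀ e ∈ T.tree.edgeSet, w e = w' e

/-- Two `X`-trees are equivalent if there is a graph isomorphism fixing `X`. -/
def Equivalent (T T' : XTree α X) : Prop :=
  ∃ φ : T.tree ≃g T'.tree, ∀ a ∈ X, φ (T.ι a) = T'.ι a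

/-- `L` is a topological lasso for `T`. -/
def IsTopologicalLasso (T : XTree α X) (L : Set (Sym2 α)) : Prop :=
  ∀ (T' : XTree α X) (w : Sym2 T.V → ℝ) (w' : Sym2 T'.V → ℝ),
    T.IsProperWeighting w → T'.IsProperWeighting w' →
    LIsometric T w T' w' L → Equivalent T T'

/-- `L` is a strong lasso for `T`. -/
def IsStrongLasso (T : XTree α X) (L : Set (Sym2 α)) : Prop :=
  IsEdgeWeightLasso T L ∧ IsTopologicalLasso T L

/-- The set of leaf labels on the side of edge `e` containing endpoint `u`. -/
def sideSet (T : XTree α X) (e : Sym2 T.V) (u : T.V) : Set α :=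
  {a | a ∈ X ∧ (T.tree.deleteEdges {e}).Reachable (T.ι a) u}

/-- The clusters of `T`: leaf sets of the two components of `T - e`, over all edges `e`. -/
def clus (T : XTree α X) : Set (Set α) :=
  {A | ∃ e ∈ T.tree.edgeSet, ∃ u ∈ e, A = T.sideSet e u}

/-- A stable transversal for a collection of subsets of `α`. -/
def IsStableTransversal (C : Set (Set α)) (f : Set α → α) : Prop :=
  (∀ A ∈ C, f A ∈ A) ∧ ∀ A ∈ C, ∀ B ∈ C, f A ∈ B → B ⊆ A → f A = f B

/-- Leaf labels of the component of `T - v` containing the vertex `u`. -/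
def compSet (T : XTree α X) (v u : T.V) : Set α :=
  {a | a ∈ X ∧ ∃ p : T.tree.Walk (T.ι a) u, v ∉ p.support}

/-- The triplet cover `L_{(T,f)}` generated by a transversal `f`. -/
def tripletCoverOf (T : XTree α X) (f : Set α → α) : Set (Sym2 α) :=
  {c | ∃ v u₁ u₂ : T.V, T.IsInterior v ∧ T.tree.Adj v u₁ ∧ T.tree.Adj v u₂ ∧ u₁ ≠ u₂ ∧
    c = s(f (T.compSet v u₁), f (T.compSet v u₂))}

/-- `L` is a stable triplet cover of `T`. -/
def IsStableTripletCover (T : XTree α X) (L : Set (Sym2 α)) : Prop :=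
  ∃ f : Set α → α, IsStableTransversal (clus T) f ∧ L = tripletCoverOf T f

/-- `T|{a,b,c,d}` is the quartet tree `ab||cd`: the four leaves are distinct members
of `X` and the path from `a` to `b` is vertex-disjoint from the path from `c` to `d`. -/
def Quartet (T : XTree α X) (a b c d : α) : Prop :=
  a ∈ X ∧ b ∈ X ∧ c ∈ X ∧ d ∈ X ∧ List.Pairwise (· ≠ ·) [a, b, c, d] ∧
  ∀ (p : T.tree.Walk (T.ι a) (T.ι b)) (q : T.tree.Walk (T.ι c) (T.ι d)),
    p.IsPath → q.IsPath → ∀ v, v ∈ p.support → v ∉ q.support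

/-- The cord `c` admits pivots relative to already-available cords `L ∪ earlier`. -/
def HasPivots (T : XTree α X) (L : Set (Sym2 α)) (earlier : List (Sym2 α))
    (c : Sym2 α) : Prop :=
  ∃ a b p q : α, c = s(a, b) ∧ Quartet T a p q b ∧
    ∀ c' ∈ [s(a, p), s(a, q), s(b, p), s(b, q), s(p, q)], c' ∈ L ∨ c' ∈ earlier

/-- `ord` is a shellable ordering of `cords X - L` with respect to `T`. -/
def IsShellableOrdering (T : XTree α X) (L : Set (Sym2 α)) (ord : List (Sym2 α)) : Prop :=
  ord.Nodup ∧ (∀ c, c ∈ ord ↔ c ∈ cords X \ L) ∧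
  ∀ i (h : i < ord.length), HasPivots T L (ord.take i) (ord.get ⟨i, h⟩)

/-- `L` is a shellable lasso for `T`: `L ⊆ cords X`, every element of `X` occurs in some
cord of `L`, and `cords X - L` admits a shellable ordering. -/
def IsShellableLasso (T : XTree α X) (L : Set (Sym2 α)) : Prop :=
  L ⊆ cords X ∧ (∀ a ∈ X, ∃ c ∈ L, a ∈ c) ∧ ∃ ord, IsShellableOrdering T L ord

/-- The graph `(Xs, L)` is a 2d-tree. -/
def Is2dTree (Xs : Set α) (L : Set (Sym2 α)) : Prop :=
  ∃ ord : List α, ord.Nodup ∧ (∀ a, a ∈ ord ↔ a ∈ Xs) ∧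
    ∃ h2 : 2 ≤ ord.length,
      s(ord.get ⟨0, by omega⟩, ord.get ⟨1, by omega⟩) ∈ L ∧
      ∀ i (h : i < ord.length), 2 ≤ i →
        {b | b ∈ ord.take i ∧ s(ord.get ⟨i, h⟩, b) ∈ L}.ncard = 2

/-- Leaves `x` and `y` form a cherry of `T`. -/
def IsCherry (T : XTree α X) (x y : α) : Prop :=
  x ≠ y ∧ x ∈ X ∧ y ∈ X ∧ ∃ v : T.V, T.tree.Adj (T.ι x) v ∧ T.tree.Adj (T.ι y) v

/-- `T'` is (equivalent to) the restriction `T|Y` of `T` to `Y ⊆ X`, characterized by the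
fact that the clusters of `T|Y` are exactly the nonempty proper restrictions to `Y`
of clusters of `T`. -/
def IsRestrictionOf {Y : Set α} (T' : XTree α Y) (T : XTree α X) : Prop :=
  Y ⊆ X ∧ clus T' = {A | (∃ B ∈ clus T, A = B ∩ Y) ∧ A.Nonempty ∧ A ≠ Y}

open Classical in
/-- One application of the extension rule (R), acting on a state consisting of
the current set of cords together with the current distance values. -/
def RStep (Xs : Set α) (S S' : Set (Sym2 α) × (Sym2 α → ℝ)) : Prop :=
  ∃ x y u z : α, x ∈ Xs ∧ y ∈ Xs ∧ u ∈ Xs ∧ z ∈ Xs ∧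
    List.Pairwise (· ≠ ·) [x, y, u, z] ∧
    s(x, y) ∈ S.1 ∧ s(y, u) ∈ S.1 ∧ s(y, z) ∈ S.1 ∧ s(x, u) ∈ S.1 ∧ s(u, z) ∈ S.1 ∧
    s(x, z) ∉ S.1 ∧
    S.2 s(x, y) + S.2 s(u, z) < S.2 s(x, u) + S.2 s(y, z) ∧
    S'.1 = insert s(x, z) S.1 ∧
    S'.2 = Function.update S.2 s(x, z) (S.2 s(x, u) + S.2 s(y, z) - S.2 s(y, u))

/-- `S` is the result `cl_R(L)` (with its `d`-values) of exhaustively applying rule (R)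
starting from `L` with initial distance values `d`. -/
def IsRClosureOf (Xs : Set α) (L : Set (Sym2 α)) (d : Sym2 α → ℝ)
    (S : Set (Sym2 α) × (Sym2 α → ℝ)) : Prop :=
  Relation.ReflTransGen (RStep Xs) (L, d) S ∧ ∀ S', ¬ RStep Xs S S'

end XTree

/-!
For the cluster `A` of leaves in the component of `T - v` at a neighbour `u` of `v`, let `f A` be
the leaf of `A` nearest to `v`, ties broken by a fixed well-order of `α`. If `B ⊆ A` is a cluster
attached at `v'`, every path from a leaf of `B` to `v` passes through `v'`, so on `B` the
distances to `v` and to `v'` differ by a constant. Hence if `f A ∈ B`, the leaves of `B` nearest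
to `v'` are exactly the leaves of `A` nearest to `v` that lie in `B`, and `f B = f A`. Every cord
of `L_(T,f)` joins nearest leaves of two components at an interior vertex, so it lies in `L`.
-/

open Classical in
/-- `d` is a junk value for empty `s`. -/
noncomputable def wellOrderMin {α : Type*} (d : α) (s : Set α) : α :=
  if h : s.Nonempty then (IsWellFounded.wf (r := @WellOrderingRel α)).min s h else d

theorem wellOrderMin_mem {α : Type*} (d : α) {s : Set α} (h : s.Nonempty) :
    wellOrderMin d s ∈ s := by
  rw [wellOrderMin, dif_pos h]
  exact WellFounded.min_mem _ s h

theorem wellOrderMin_of_subset {α : Type*} (d : α) {s t : Set α} (hts : t ⊆ s)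
    (hmem : wellOrderMin d s ∈ t) : wellOrderMin d t = wellOrderMin d s := by
  have ht : t.Nonempty := ⟨_, hmem⟩
  have hs : s.Nonempty := ht.mono hts
  simp only [wellOrderMin, dif_pos ht, dif_pos hs] at hmem ⊢
  have wf := IsWellFounded.wf (r := @WellOrderingRel α)
  rcases trichotomous_of WellOrderingRel (wf.min t ht) (wf.min s hs) with hlt | heq | hgt
  · exact absurd hlt (wf.not_lt_min s (hts (wf.min_mem t ht)))
  · exact heq
  · exact absurd hgt (wf.not_lt_min t hmem)

namespace XTree

open SimpleGraph Walk

variable {α : Type} {X : Set α}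

instance instFintypeV (T : XTree α X) : Fintype T.V := T.fintypeV

theorem finite_leaves (T : XTree α X) : X.Finite :=
  Set.Finite.of_finite_image (Set.toFinite _) T.ι_injOn

variable {T : XTree α X}

theorem eq_treePath {x y : T.V} (p : T.tree.Walk x y) (hp : p.IsPath) : p = T.treePath x y :=
  (T.isTree.existsUnique_path x y).unique hp (T.treePath_isPath x y)

theorem pathDist_split (w : Sym2 T.V → ℝ) {x y t : T.V} (ht : t ∈ (T.treePath x y).support) :
    T.pathDist w x y = T.pathDist w x t + T.pathDist w t y := by
  classical
  have h₁ := eq_treePath _ ((T.treePath_isPath x y).takeUntil ht)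
  have h₂ := eq_treePath _ ((T.treePath_isPath x y).dropUntil ht)
  unfold pathDist
  rw [← h₁, ← h₂, ← List.sum_append, ← List.map_append, ← edges_append, take_spec]

def ReachAvoiding (T : XTree α X) (v x y : T.V) : Prop :=
  ∃ p : T.tree.Walk x y, v ∉ p.support

theorem mem_compSet {v u : T.V} {a : α} :
    a ∈ T.compSet v u ↔ a ∈ X ∧ T.ReachAvoiding v (T.ι a) u :=
  Iff.rfl

namespace ReachAvoiding

variable {v x y z : T.V}

theorem refl (h : x ≠ v) : T.ReachAvoiding v x x :=
  ⟨nil, by simpa using h.symm⟩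

theorem symm (h : T.ReachAvoiding v x y) : T.ReachAvoiding v y x :=
  let ⟨p, hp⟩ := h
  ⟨p.reverse, by simpa using hp⟩

theorem trans (h : T.ReachAvoiding v x y) (h' : T.ReachAvoiding v y z) :
    T.ReachAvoiding v x z := by
  obtain ⟨p, hp⟩ := h
  obtain ⟨q, hq⟩ := h'
  refine ⟨p.append q, fun hv => ?_⟩
  rcases (mem_support_append_iff p q).mp hv with hv | hv
  exacts [hp hv, hq hv]

theorem ne_right (h : T.ReachAvoiding v x y) : y ≠ v := by
  rintro rfl
  obtain ⟨p, hp⟩ := h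
  exact hp p.end_mem_support

theorem ne_left (h : T.ReachAvoiding v x y) : x ≠ v :=
  h.symm.ne_right

theorem of_mem_support {p : T.tree.Walk x y} (hp : v ∉ p.support) {t : T.V}
    (ht : t ∈ p.support) : T.ReachAvoiding v t y := by
  classical
  exact ⟨p.dropUntil t ht, fun hv => hp (p.support_dropUntil_subset_support ht hv)⟩

end ReachAvoiding

theorem reachAvoiding_iff {v x y : T.V} :
    T.ReachAvoiding v x y ↔ v ∉ (T.treePath x y).support := by
  classical
  refine ⟨fun ⟨p, hp⟩ => ?_, fun h => ⟨_, h⟩⟩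
  rw [← eq_treePath _ p.bypass_isPath]
  exact fun hv => hp (p.support_bypass_subset_support hv)

theorem not_reachAvoiding_of_adj {v u u' : T.V} (hu : T.tree.Adj v u) (hu' : T.tree.Adj v u')
    (hne : u ≠ u') : ¬ T.ReachAvoiding v u u' := by
  classical
  rintro ⟨p, hp⟩
  have hpath : (cons hu p.bypass).IsPath := (cons_isPath_iff _ _).mpr
    ⟨p.bypass_isPath, fun hv => hp (p.support_bypass_subset_support hv)⟩
  have hsnd : u' = u := by
    simpa using T.isTree.isAcyclic.eq_snd_of_adj_start hpath hu' (end_mem_support _)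
  exact hne hsnd.symm

theorem exists_adj_reachAvoiding {v t : T.V} (h : v ≠ t) :
    ∃ n, T.tree.Adj v n ∧ T.ReachAvoiding v n t := by
  obtain ⟨p, hp⟩ := T.isTree.connected.exists_isPath v t
  cases p with
  | nil => exact absurd rfl h
  | cons hn q => exact ⟨_, hn, q, ((cons_isPath_iff hn q).mp hp).2⟩

/-- An interior vertex has degree at least 3, as `T` has no vertex of degree 2. -/
theorem exists_adj_ne_ne {v u : T.V} (hv : T.IsInterior v) (hu : T.tree.Adj v u) (m : T.V) :
    ∃ n, T.tree.Adj v n ∧ n ≠ u ∧ n ≠ m := by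
  have hpos : 0 < (T.tree.neighborSet v).ncard := (Set.ncard_pos (Set.toFinite _)).mpr ⟨u, hu⟩
  have hne_one : (T.tree.neighborSet v).ncard ≠ 1 := fun h => hv ((T.leaf_iff v).mp h)
  have hpair : ({u, m} : Set T.V).ncard ≤ 2 := by
    simpa using Set.ncard_insert_le u {m}
  obtain ⟨n, hn, hnum⟩ := Set.exists_mem_notMem_of_ncard_lt_ncard
    (s := {u, m}) (t := T.tree.neighborSet v) (by have := T.no_deg_two v; omega)
  simp only [Set.mem_insert_iff, Set.mem_singleton_iff, not_or] at hnum
  exact ⟨n, hn, hnum⟩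

/-- A vertex of the component at `u` farthest from `u` is a leaf: all its neighbours lie on the
path from `v` to it, and in a tree that leaves only the penultimate vertex. -/
theorem compSet_nonempty {v u : T.V} (h : T.tree.Adj v u) : (T.compSet v u).Nonempty := by
  obtain ⟨z, hz, hmax⟩ := Set.exists_max_image {z | T.ReachAvoiding v u z}
    (fun z => (T.treePath u z).length) (Set.toFinite _) ⟨u, .refl h.ne'⟩
  set q := T.treePath u z
  have hvq : v ∉ q.support := reachAvoiding_iff.mp hz
  have hp : (cons h q).IsPath := (cons_isPath_iff h q).mpr ⟨T.treePath_isPath u z, hvq⟩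
  have hnbr : T.tree.neighborSet z = {(cons h q).penultimate} := by
    ext y
    refine ⟨fun hy => ?_, fun hy => hy ▸ ((cons h q).adj_penultimate not_nil_cons).symm⟩
    replace hy : T.tree.Adj z y := hy
    by_cases hyp : y ∈ (cons h q).support
    · exact T.isTree.isAcyclic.eq_penultimate_of_adj_end hp hy hyp
    rw [support_cons, List.mem_cons, not_or] at hyp
    have hext : (q.concat hy).IsPath := (T.treePath_isPath u z).concat hyp.2 hy
    have hyS : T.ReachAvoiding v u y :=
      ⟨q.concat hy, by simp [support_concat, hvq, Ne.symm hyp.1]⟩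
    have := hmax y hyS
    rw [← eq_treePath _ hext, length_concat] at this
    omega
  obtain ⟨a, ha, rfl⟩ := (T.leaf_iff z).mp (by rw [hnbr, Set.ncard_singleton])
  exact ⟨a, ha, hz.symm⟩

/-- If `v` were in the component of `T - v'` at `u'`, a leaf in a third component of `T - v`
(or `v` itself, when it is a leaf) would lie in `compSet v' u'` but not in `compSet v u`. -/
theorem not_reachAvoiding_of_compSet_subset {v u v' u' : T.V} (hu : T.tree.Adj v u)
    (hsub : T.compSet v' u' ⊆ T.compSet v u) : ¬ T.ReachAvoiding v' v u' := by
  intro hvu'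
  by_cases hv : T.IsInterior v
  · obtain ⟨m, hm, hmv'⟩ := exists_adj_reachAvoiding hvu'.ne_left
    obtain ⟨n, hn, hnu, hnm⟩ := exists_adj_ne_ne hv hu m
    obtain ⟨x, hxX, p, hp⟩ := compSet_nonempty hn
    have hv'p : v' ∉ p.support := fun hv' => not_reachAvoiding_of_adj hn hm hnm
      ((ReachAvoiding.of_mem_support hp hv').symm.trans hmv'.symm)
    have hxv : T.ReachAvoiding v' (T.ι x) v :=
      ⟨p.concat hn.symm, by simp [support_concat, hv'p, hvu'.ne_left.symm]⟩
    exact not_reachAvoiding_of_adj hn hu hnu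
      ((ReachAvoiding.symm ⟨p, hp⟩).trans (mem_compSet.mp (hsub ⟨hxX, hxv.trans hvu'⟩)).2)
  · obtain ⟨c, hc, rfl⟩ := not_not.mp hv
    exact ReachAvoiding.ne_left (mem_compSet.mp (hsub ⟨hc, hvu'⟩)).2 rfl

theorem pathDist_eq_add_of_compSet_subset (w : Sym2 T.V → ℝ) {v u v' u' : T.V}
    (hu : T.tree.Adj v u) (hsub : T.compSet v' u' ⊆ T.compSet v u) {b : α}
    (hb : b ∈ T.compSet v' u') :
    T.pathDist w (T.ι b) v = T.pathDist w (T.ι b) v' + T.pathDist w v' v := by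
  refine pathDist_split w (not_not.mp fun hv' => ?_)
  exact not_reachAvoiding_of_compSet_subset hu hsub
    ((reachAvoiding_iff.mpr hv').symm.trans (mem_compSet.mp hb).2)

theorem sideSet_eq_compSet {v u : T.V} (h : T.tree.Adj v u) :
    T.sideSet s(v, u) u = T.compSet v u := by
  classical
  ext a
  refine and_congr_right fun _ => ⟨fun ⟨p⟩ => ?_, fun ⟨p, hp⟩ => ?_⟩
  · set q := p.bypass.mapLe (T.tree.deleteEdges_le {s(v, u)})
    refine ⟨q, fun hv => ?_⟩
    have hpen : v = q.penultimate :=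
      T.isTree.isAcyclic.eq_penultimate_of_adj_end (p.bypass_isPath.mapLe _) h.symm hv
    have hnil : ¬ q.Nil := fun hnil => h.ne <| by
      rw [nil_iff_support_eq.mp hnil, List.mem_singleton] at hv
      exact hv.trans hnil.eq
    have he : s(v, u) ∈ p.bypass.edges := by
      have := q.mk_penultimate_end_mem_edges hnil
      rwa [← hpen, edges_mapLe_eq_edges] at this
    simpa using p.bypass.edges_subset_edgeSet he
  · refine ⟨p.toDeleteEdges {s(v, u)} fun e he hmem => hp ?_⟩
    rw [Set.mem_singleton_iff] at hmem
    exact p.fst_mem_support_of_mem_edges (hmem ▸ he)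

theorem exists_eq_compSet_of_mem_clus {A : Set α} (hA : A ∈ T.clus) :
    ∃ v u, T.tree.Adj v u ∧ A = T.compSet v u := by
  obtain ⟨e, he, u, hu, rfl⟩ := hA
  obtain ⟨v, rfl⟩ := Sym2.mem_iff_exists.mp hu
  rw [SimpleGraph.mem_edgeSet] at he
  exact ⟨v, u, he.symm, by rw [Sym2.eq_swap, sideSet_eq_compSet he.symm]⟩

/-- The leaves of `A` nearest to a vertex `v` at which `A` is attached; by
`mem_nearestLeaves_compSet` the choice of the attachment `(v, u)` does not matter. -/
def nearestLeaves (T : XTree α X) (w : Sym2 T.V → ℝ) (A : Set α) : Set α :=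
  {a ∈ A | ∃ v u, T.tree.Adj v u ∧ A = T.compSet v u ∧
    ∀ b ∈ A, T.pathDist w (T.ι a) v ≤ T.pathDist w (T.ι b) v}

variable (w : Sym2 T.V → ℝ)

theorem mem_nearestLeaves_compSet {v u : T.V} (h : T.tree.Adj v u) {a : α} :
    a ∈ T.nearestLeaves w (T.compSet v u) ↔
      a ∈ T.compSet v u ∧
        ∀ b ∈ T.compSet v u, T.pathDist w (T.ι a) v ≤ T.pathDist w (T.ι b) v := by
  refine ⟨fun ⟨ha, v₀, u₀, h₀, hA, hmin⟩ => ⟨ha, fun b hb => ?_⟩,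
    fun ⟨ha, hmin⟩ => ⟨ha, v, u, h, rfl, hmin⟩⟩
  have hda := pathDist_eq_add_of_compSet_subset w h₀ hA.le ha
  have hdb := pathDist_eq_add_of_compSet_subset w h₀ hA.le hb
  linarith [hmin b hb]

theorem nearestLeaves_compSet_nonempty {v u : T.V} (h : T.tree.Adj v u) :
    (T.nearestLeaves w (T.compSet v u)).Nonempty := by
  obtain ⟨a, ha, hmin⟩ := Set.exists_min_image _ (fun a => T.pathDist w (T.ι a) v)
    (T.finite_leaves.subset fun _ hb => hb.1) (compSet_nonempty h)
  exact ⟨a, (mem_nearestLeaves_compSet w h).mpr ⟨ha, hmin⟩⟩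

theorem nearestLeaves_eq_inter {v u v' u' : T.V} (h : T.tree.Adj v u) (h' : T.tree.Adj v' u')
    (hsub : T.compSet v' u' ⊆ T.compSet v u)
    (hne : (T.nearestLeaves w (T.compSet v u) ∩ T.compSet v' u').Nonempty) :
    T.nearestLeaves w (T.compSet v' u') =
      T.nearestLeaves w (T.compSet v u) ∩ T.compSet v' u' := by
  obtain ⟨c, hcA, hcB⟩ := hne
  rw [mem_nearestLeaves_compSet w h] at hcA
  have hd := fun b (hb : b ∈ T.compSet v' u') => pathDist_eq_add_of_compSet_subset w h hsub hb
  ext a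
  simp only [mem_nearestLeaves_compSet w h, mem_nearestLeaves_compSet w h', Set.mem_inter_iff]
  constructor
  · rintro ⟨haB, hmin⟩
    refine ⟨⟨hsub haB, fun b hb => ?_⟩, haB⟩
    linarith [hmin c hcB, hcA.2 b hb, hd a haB, hd c hcB]
  · rintro ⟨⟨-, hmin⟩, haB⟩
    refine ⟨haB, fun b hb => ?_⟩
    linarith [hmin b (hsub hb), hd a haB, hd b hb]

noncomputable def nearestLeaf (T : XTree α X) (w : Sym2 T.V → ℝ) (d : α) (A : Set α) : α :=
  wellOrderMin d (T.nearestLeaves w A)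

variable {T : XTree α X} (w : Sym2 T.V → ℝ) (d : α)

theorem nearestLeaf_mem {v u : T.V} (h : T.tree.Adj v u) :
    T.nearestLeaf w d (T.compSet v u) ∈ T.nearestLeaves w (T.compSet v u) :=
  wellOrderMin_mem d (nearestLeaves_compSet_nonempty w h)

theorem isStableTransversal_nearestLeaf : IsStableTransversal T.clus (T.nearestLeaf w d) := by
  refine ⟨fun A hA => ?_, fun A hA B hB hfB hBA => ?_⟩
  · obtain ⟨v, u, h, rfl⟩ := exists_eq_compSet_of_mem_clus hA
    exact (nearestLeaf_mem w d h).1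
  · obtain ⟨v, u, h, rfl⟩ := exists_eq_compSet_of_mem_clus hA
    obtain ⟨v', u', h', rfl⟩ := exists_eq_compSet_of_mem_clus hB
    have hf : T.nearestLeaf w d (T.compSet v u) ∈
        T.nearestLeaves w (T.compSet v u) ∩ T.compSet v' u' := ⟨nearestLeaf_mem w d h, hfB⟩
    rw [nearestLeaf, nearestLeaf, nearestLeaves_eq_inter w h h' hBA ⟨_, hf⟩]
    exact (wellOrderMin_of_subset d Set.inter_subset_left hf).symm

end XTree

open XTree in
theorem contains_stable_triplet_cover_general {α : Type} (X : Set α)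
    (hcard : 3 ≤ X.ncard) (T : XTree α X)
    (w : Sym2 T.V → ℝ)
    (L : Set (Sym2 α))
    (hL : ∀ v : T.V, T.IsInterior v →
      ∀ u₁ u₂ : T.V, T.tree.Adj v u₁ → T.tree.Adj v u₂ → u₁ ≠ u₂ →
        ∀ a ∈ T.compSet v u₁, ∀ b ∈ T.compSet v u₂,
          (∀ a' ∈ T.compSet v u₁, T.pathDist w (T.ι a) v ≤ T.pathDist w (T.ι a') v) →
          (∀ b' ∈ T.compSet v u₂, T.pathDist w (T.ι b) v ≤ T.pathDist w (T.ι b') v) →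
          s(a, b) ∈ L) :
    ∃ L' ⊆ L, IsStableTripletCover T L' := by
  obtain ⟨d, -⟩ := Set.nonempty_of_ncard_ne_zero (by omega : X.ncard ≠ 0)
  refine ⟨T.tripletCoverOf (T.nearestLeaf w d), ?_, _, isStableTransversal_nearestLeaf w d, rfl⟩
  rintro c ⟨v, u₁, u₂, hv, h₁, h₂, hne, rfl⟩
  obtain ⟨ha, hmin₁⟩ := (mem_nearestLeaves_compSet w h₁).mp (nearestLeaf_mem w d h₁)
  obtain ⟨hb, hmin₂⟩ := (mem_nearestLeaves_compSet w h₂).mp (nearestLeaf_mem w d h₂)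
  exact hL v hv u₁ u₂ h₁ h₂ hne _ ha _ hb hmin₁ hmin₂

open XTree in
/-- Let `T` be a fully-resolved `X`-tree with a proper edge-weighting
`w`, and suppose `L ⊆ binom(X,2)` contains, for every interior vertex `v` of `T`, every
cord `xy` such that `x` is a leaf at minimum weighted path distance to `v` in one
component of `T - v` and `y` is a leaf at minimum weighted path distance to `v` in
another component of `T - v`. Then `L` contains a stable triplet cover for `T`. -/
theorem contains_stable_triplet_cover {α : Type} (X : Set α) (hfin : X.Finite)
    (hcard : 3 ≤ X.ncard) (T : XTree α X) (hT : T.IsFullyResolved)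
    (w : Sym2 T.V → ℝ) (hw : T.IsProperWeighting w)
    (L : Set (Sym2 α))
    (hL : ∀ v : T.V, T.IsInterior v →
      ∀ u₁ u₂ : T.V, T.tree.Adj v u₁ → T.tree.Adj v u₂ → u₁ ≠ u₂ →
        ∀ a ∈ T.compSet v u₁, ∀ b ∈ T.compSet v u₂,
          (∀ a' ∈ T.compSet v u₁, T.pathDist w (T.ι a) v ≤ T.pathDist w (T.ι a') v) →
          (∀ b' ∈ T.compSet v u₂, T.pathDist w (T.ι b) v ≤ T.pathDist w (T.ι b') v) →
          s(a, b) ∈ L) :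
    ∃ L' ⊆ L, IsStableTripletCover T L' :=
  contains_stable_triplet_cover_general X hcard T w L hL
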